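/- In the Hermite basis, if b ∈ L²(ℝ) with square-integrable derivative b' and b(x)h_j(x) → 0 as x → ±∞ for all j, then the derivative b_m' of the orthogonal projection b_m of b onto span{h_0,...,h_{m-1}} and the projection (b')_m of b' onto the same space satisfy b_m' - (b')_m = -√(m/2)⟨b,h_{m-1}⟩ h_m - √(m/2)⟨b,h_m⟩ h_{m-1}, and hence ‖b_m' - (b')_m‖² = (m/2)(⟨b,h_{m-1}⟩² + ⟨b,h_m⟩²). -/

import Mathlib

open MeasureTheory Filter

/-- The j-th (physicists') Hermite polynomial `H_j(x) = (-1)^j e^{x²} (d/dx)^j e^{-x²}`. -/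
noncomputable def hermitePoly (j : ℕ) (x : ℝ) : ℝ :=
  (-1 : ℝ) ^ j * Real.exp (x ^ 2) * iteratedDeriv j (fun y => Real.exp (-y ^ 2)) x

/-- The Hermite function `h_j(x) = (2^j j! √π)^{-1/2} H_j(x) e^{-x²/2}`. -/
noncomputable def hermiteFun (j : ℕ) (x : ℝ) : ℝ :=
  ((2 : ℝ) ^ j * (Nat.factorial j : ℝ) * Real.sqrt Real.pi) ^ (-(1 / 2 : ℝ))
    * hermitePoly j x * Real.exp (-x ^ 2 / 2)

/-- Hermite coefficient `⟨b, h_j⟩ = ∫ b h_j` in L²(ℝ). -/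
noncomputable def hermiteCoef (b : ℝ → ℝ) (j : ℕ) : ℝ := ∫ x : ℝ, b x * hermiteFun j x

/-- Orthogonal projection of `b` onto `span{h_0,…,h_{m-1}}`. -/
noncomputable def hermiteProj (b : ℝ → ℝ) (m : ℕ) (x : ℝ) : ℝ :=
  ∑ j ∈ Finset.range m, hermiteCoef b j * hermiteFun j x

/-!
Write `h_j = c_j H_j(x) e^{-x²/2}`, where the Hermite polynomials satisfy
`H_{j+1} = 2x H_j - H_j'` and `H_j' = 2j H_{j-1}`. This gives the ladder relation
`h_j' = √(j/2) h_{j-1} - √((j+1)/2) h_{j+1}`, and integration by parts against `e^{-x²}` gives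
orthonormality. Integrating the ladder relation by parts against `b` gives
`⟨b', h_j⟩ = √((j+1)/2) ⟨b, h_{j+1}⟩ - √(j/2) ⟨b, h_{j-1}⟩`. Substituting both relations into
`b_m' - (b')_m`, the sum over `j < m` telescopes to the two terms at index `m`, whose squared
norm follows from orthonormality of `h_{m-1}` and `h_m`.
-/

open Polynomial

noncomputable def physHermite : ℕ → ℝ[X]
  | 0 => 1
  | n + 1 => C 2 * X * physHermite n - derivative (physHermite n)

lemma physHermite_zero : physHermite 0 = 1 := rfl

lemma physHermite_succ (n : ℕ) :
    physHermite (n + 1) = C 2 * X * physHermite n - derivative (physHermite n) := rfl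

lemma derivative_physHermite_succ (n : ℕ) :
    derivative (physHermite (n + 1)) = C (2 * (n + 1) : ℝ) * physHermite n := by
  induction n with
  | zero => simp [physHermite]
  | succ n ih =>
    rw [physHermite_succ (n + 1), derivative_sub, derivative_mul, derivative_mul, derivative_C,
      derivative_X, ih, derivative_C_mul, physHermite_succ n]
    push_cast
    simp only [map_add, map_mul, map_natCast, map_one]
    ring

lemma hasDerivAt_exp_neg_sq (x : ℝ) :
    HasDerivAt (fun y : ℝ => Real.exp (-y ^ 2)) (-(2 * x) * Real.exp (-x ^ 2)) x := by
  simpa [mul_comm] using ((hasDerivAt_pow 2 x).neg).exp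

lemma hasDerivAt_physHermite_mul_exp_neg_sq (j : ℕ) (x : ℝ) :
    HasDerivAt (fun y => (physHermite j).eval y * Real.exp (-y ^ 2))
      (-((physHermite (j + 1)).eval x * Real.exp (-x ^ 2))) x := by
  refine (((physHermite j).hasDerivAt x).mul (hasDerivAt_exp_neg_sq x)).congr_deriv ?_
  simp only [physHermite_succ, eval_sub, eval_mul, eval_C, eval_X]
  ring

lemma iteratedDeriv_exp_neg_sq (n : ℕ) :
    iteratedDeriv n (fun y : ℝ => Real.exp (-y ^ 2))
      = fun x => (-1) ^ n * ((physHermite n).eval x * Real.exp (-x ^ 2)) := by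
  induction n with
  | zero => simp [physHermite_zero]
  | succ n ih =>
    funext x
    rw [iteratedDeriv_succ, ih, ((hasDerivAt_physHermite_mul_exp_neg_sq n x).const_mul _).deriv,
      pow_succ]
    ring

lemma hermitePoly_eq_eval_physHermite (j : ℕ) (x : ℝ) :
    hermitePoly j x = (physHermite j).eval x := by
  rw [hermitePoly, iteratedDeriv_exp_neg_sq]
  calc (-1) ^ j * Real.exp (x ^ 2) * ((-1) ^ j * ((physHermite j).eval x * Real.exp (-x ^ 2)))
      = ((-1) ^ j * (-1) ^ j) * (Real.exp (x ^ 2) * Real.exp (-x ^ 2))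
        * (physHermite j).eval x := by ring
    _ = (physHermite j).eval x := by
      rw [← Real.exp_add, ← mul_pow]; simp

lemma integrable_pow_mul_exp_neg_mul_sq {b : ℝ} (hb : 0 < b) (n : ℕ) :
    Integrable fun x : ℝ => x ^ n * Real.exp (-b * x ^ 2) := by
  simpa [Real.rpow_natCast] using
    integrable_rpow_mul_exp_neg_mul_sq hb (s := n) (by linarith [n.cast_nonneg (α := ℝ)])

lemma integrable_eval_mul_exp_neg_mul_sq {b : ℝ} (hb : 0 < b) (p : ℝ[X]) :
    Integrable fun x : ℝ => p.eval x * Real.exp (-b * x ^ 2) := by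
  simp_rw [eval_eq_sum_range, Finset.sum_mul, mul_assoc]
  exact integrable_finsetSum _
    fun i _ => (integrable_pow_mul_exp_neg_mul_sq hb i).const_mul _

lemma integrable_eval_mul_exp_neg_sq (p : ℝ[X]) :
    Integrable fun x : ℝ => p.eval x * Real.exp (-x ^ 2) := by
  simpa using integrable_eval_mul_exp_neg_mul_sq one_pos p

/-- Integration by parts against the Gaussian weight: `2x - d/dx` raises `H_j` to `H_{j+1}`. -/
lemma integral_eval_derivative_mul_physHermite (p : ℝ[X]) (j : ℕ) :
    ∫ x, (derivative p).eval x * ((physHermite j).eval x * Real.exp (-x ^ 2))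
      = ∫ x, p.eval x * ((physHermite (j + 1)).eval x * Real.exp (-x ^ 2)) := by
  have hibp := integral_mul_deriv_eq_deriv_mul_of_integrable
    (fun x _ => p.hasDerivAt x) (fun x _ => hasDerivAt_physHermite_mul_exp_neg_sq j x)
    (by simpa [Pi.mul_def, mul_assoc] using
      (integrable_eval_mul_exp_neg_sq (p * physHermite (j + 1))).neg)
    (by simpa [Pi.mul_def, mul_assoc] using
      integrable_eval_mul_exp_neg_sq (derivative p * physHermite j))
    (by simpa [Pi.mul_def, mul_assoc] using integrable_eval_mul_exp_neg_sq (p * physHermite j))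
  simp only [mul_neg, integral_neg, neg_inj] at hibp
  exact hibp.symm

lemma integral_physHermite_mul_physHermite (i j : ℕ) :
    ∫ x, (physHermite i).eval x * ((physHermite j).eval x * Real.exp (-x ^ 2))
      = if i = j then 2 ^ j * j.factorial * Real.sqrt Real.pi else 0 := by
  induction i generalizing j with
  | zero =>
    cases j with
    | zero => simpa [physHermite] using integral_gaussian 1
    | succ j =>
      simpa [physHermite_zero] using (integral_eval_derivative_mul_physHermite 1 j).symm
  | succ i ih =>
    cases j with
    | zero =>
      simp_rw [← mul_assoc, mul_comm ((physHermite (i + 1)).eval _), mul_assoc]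
      simpa [physHermite_zero] using (integral_eval_derivative_mul_physHermite 1 i).symm
    | succ j =>
      rw [← integral_eval_derivative_mul_physHermite, derivative_physHermite_succ]
      simp only [eval_mul, eval_C, mul_assoc, integral_const_mul, ih, Nat.factorial_succ]
      simp only [Nat.add_right_cancel_iff]
      split_ifs with hij
      · subst hij
        push_cast
        ring
      · simp

noncomputable def hermiteConst (j : ℕ) : ℝ :=
  ((2 : ℝ) ^ j * j.factorial * Real.sqrt Real.pi) ^ (-(1 / 2 : ℝ))

lemma hermiteFun_eq (j : ℕ) (x : ℝ) :
    hermiteFun j x = hermiteConst j * ((physHermite j).eval x * Real.exp (-x ^ 2 / 2)) := by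
  rw [hermiteFun, hermitePoly_eq_eval_physHermite, hermiteConst, mul_assoc]

lemma two_pow_mul_factorial_mul_sqrt_pi_pos (j : ℕ) :
    (0 : ℝ) < 2 ^ j * j.factorial * Real.sqrt Real.pi := by
  have := Real.sqrt_pos.mpr Real.pi_pos
  positivity

lemma hermiteConst_pos (j : ℕ) : 0 < hermiteConst j :=
  Real.rpow_pos_of_pos (two_pow_mul_factorial_mul_sqrt_pi_pos j) _

lemma hermiteConst_sq_mul (j : ℕ) :
    hermiteConst j ^ 2 * (2 ^ j * j.factorial * Real.sqrt Real.pi) = 1 := by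
  have hN := two_pow_mul_factorial_mul_sqrt_pi_pos j
  rw [hermiteConst, ← Real.rpow_natCast, ← Real.rpow_mul hN.le,
    show -(1 / 2 : ℝ) * (2 : ℕ) = -1 by norm_num, Real.rpow_neg_one, inv_mul_cancel₀ hN.ne']

lemma hermiteConst_eq_succ (j : ℕ) :
    hermiteConst j = 2 * Real.sqrt ((j + 1) / 2) * hermiteConst (j + 1) := by
  have hs : Real.sqrt ((j + 1) / 2) ^ 2 = (j + 1) / 2 := Real.sq_sqrt (by positivity)
  have hsucc := hermiteConst_sq_mul (j + 1)
  rw [pow_succ (2 : ℝ) j, Nat.factorial_succ] at hsucc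
  push_cast at hsucc
  refine (sq_eq_sq₀ (hermiteConst_pos j).le
    (mul_nonneg (by positivity) (hermiteConst_pos _).le)).mp ?_
  apply mul_right_cancel₀ (two_pow_mul_factorial_mul_sqrt_pi_pos j).ne'
  rw [hermiteConst_sq_mul, mul_pow, mul_pow, hs]
  linear_combination -hsucc

lemma sqrt_mul_hermiteFun_succ (j : ℕ) (x : ℝ) :
    Real.sqrt ((j + 1) / 2) * hermiteFun (j + 1) x
      = hermiteConst j / 2 * ((physHermite (j + 1)).eval x * Real.exp (-x ^ 2 / 2)) := by
  rw [hermiteFun_eq, hermiteConst_eq_succ j]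
  ring

lemma sqrt_mul_hermiteFun_pred (j : ℕ) (x : ℝ) :
    Real.sqrt (j / 2) * hermiteFun (j - 1) x
      = hermiteConst j / 2 * ((derivative (physHermite j)).eval x * Real.exp (-x ^ 2 / 2)) := by
  cases j with
  | zero => simp [physHermite_zero]
  | succ k =>
    have hs : Real.sqrt ((k + 1) / 2) ^ 2 = (k + 1) / 2 := Real.sq_sqrt (by positivity)
    rw [Nat.add_sub_cancel, hermiteFun_eq, derivative_physHermite_succ, hermiteConst_eq_succ k]
    simp only [eval_mul, eval_C]
    push_cast
    linear_combination
      2 * hermiteConst (k + 1) * ((physHermite k).eval x * Real.exp (-x ^ 2 / 2)) * hs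

lemma hasDerivAt_hermiteFun (j : ℕ) (x : ℝ) :
    HasDerivAt (hermiteFun j)
      (Real.sqrt (j / 2) * hermiteFun (j - 1) x
        - Real.sqrt ((j + 1) / 2) * hermiteFun (j + 1) x) x := by
  have hgauss : HasDerivAt (fun y : ℝ => Real.exp (-y ^ 2 / 2)) (-x * Real.exp (-x ^ 2 / 2)) x :=
    ((hasDerivAt_pow 2 x).fun_neg.div_const 2).exp.congr_deriv (by push_cast; ring)
  rw [sqrt_mul_hermiteFun_pred, sqrt_mul_hermiteFun_succ, funext (hermiteFun_eq j)]
  refine ((((physHermite j).hasDerivAt x).mul hgauss).const_mul (hermiteConst j)).congr_deriv ?_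
  simp only [physHermite_succ, eval_sub, eval_mul, eval_C, eval_X]
  ring

lemma continuous_hermiteFun (j : ℕ) : Continuous (hermiteFun j) := by
  rw [funext (hermiteFun_eq j)]
  fun_prop

lemma hermiteFun_mul_hermiteFun (i j : ℕ) (x : ℝ) :
    hermiteFun i x * hermiteFun j x = hermiteConst i * hermiteConst j
      * ((physHermite i).eval x * ((physHermite j).eval x * Real.exp (-x ^ 2))) := by
  have hexp : Real.exp (-x ^ 2) = Real.exp (-x ^ 2 / 2) * Real.exp (-x ^ 2 / 2) := by
    rw [← Real.exp_add]; ring_nf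
  rw [hermiteFun_eq, hermiteFun_eq, hexp]
  ring

lemma memLp_hermiteFun (j : ℕ) : MemLp (hermiteFun j) 2 := by
  rw [memLp_two_iff_integrable_sq (continuous_hermiteFun j).aestronglyMeasurable]
  simp_rw [sq, hermiteFun_mul_hermiteFun]
  simpa [mul_assoc] using
    (integrable_eval_mul_exp_neg_sq (physHermite j * physHermite j)).const_mul
      (hermiteConst j * hermiteConst j)

lemma integral_hermiteFun_mul (i j : ℕ) :
    ∫ x, hermiteFun i x * hermiteFun j x = if i = j then 1 else 0 := by
  simp_rw [hermiteFun_mul_hermiteFun, integral_const_mul, integral_physHermite_mul_physHermite]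
  split_ifs with hij
  · rw [hij, ← sq, hermiteConst_sq_mul]
  · rw [mul_zero]

lemma hermiteCoef_deriv {b : ℝ → ℝ} (hb : Differentiable ℝ b) (hbL2 : MemLp b 2)
    (hb'L2 : MemLp (deriv b) 2) (j : ℕ) :
    hermiteCoef (deriv b) j
      = Real.sqrt ((j + 1) / 2) * hermiteCoef b (j + 1)
        - Real.sqrt (j / 2) * hermiteCoef b (j - 1) := by
  have hpred : Integrable fun x => hermiteFun (j - 1) x * b x :=
    (memLp_hermiteFun (j - 1)).integrable_mul hbL2
  have hsucc : Integrable fun x => hermiteFun (j + 1) x * b x :=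
    (memLp_hermiteFun (j + 1)).integrable_mul hbL2
  -- `b h_j` is integrable, so the boundary terms of the integration by parts vanish.
  have hibp := integral_mul_deriv_eq_deriv_mul_of_integrable
    (fun x _ => hasDerivAt_hermiteFun j x) (fun x _ => (hb x).hasDerivAt)
    ((memLp_hermiteFun j).integrable_mul hb'L2)
    (((memLp_hermiteFun (j - 1)).const_mul _).sub ((memLp_hermiteFun (j + 1)).const_mul _)
      |>.integrable_mul hbL2)
    ((memLp_hermiteFun j).integrable_mul hbL2)
  simp only [sub_mul, mul_assoc] at hibp
  rw [integral_sub (hpred.const_mul _) (hsucc.const_mul _), integral_const_mul,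
    integral_const_mul] at hibp
  simp only [hermiteCoef, mul_comm (b _), mul_comm (deriv b _)]
  linarith

lemma hasDerivAt_hermiteProj (b : ℝ → ℝ) (m : ℕ) (x : ℝ) :
    HasDerivAt (hermiteProj b m)
      (∑ j ∈ Finset.range m, hermiteCoef b j * (Real.sqrt (j / 2) * hermiteFun (j - 1) x
        - Real.sqrt ((j + 1) / 2) * hermiteFun (j + 1) x)) x :=
  HasDerivAt.fun_sum fun j _ => (hasDerivAt_hermiteFun j x).const_mul (hermiteCoef b j)

lemma deriv_hermiteProj_sub_hermiteProj_deriv {b : ℝ → ℝ} (hb : Differentiable ℝ b)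
    (hbL2 : MemLp b 2) (hb'L2 : MemLp (deriv b) 2) (m : ℕ) (x : ℝ) :
    deriv (hermiteProj b m) x - hermiteProj (deriv b) m x
      = -Real.sqrt (m / 2) * hermiteCoef b (m - 1) * hermiteFun m x
        - Real.sqrt (m / 2) * hermiteCoef b m * hermiteFun (m - 1) x := by
  set F : ℕ → ℝ := fun j => Real.sqrt (j / 2) * hermiteCoef b j * hermiteFun (j - 1) x
  set G : ℕ → ℝ := fun j => Real.sqrt (j / 2) * hermiteCoef b (j - 1) * hermiteFun j x
  calc deriv (hermiteProj b m) x - hermiteProj (deriv b) m x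
      = ∑ j ∈ Finset.range m, ((F j - F (j + 1)) + (G j - G (j + 1))) := by
        rw [(hasDerivAt_hermiteProj b m x).deriv, hermiteProj, ← Finset.sum_sub_distrib]
        refine Finset.sum_congr rfl fun j _ => ?_
        simp only [F, G, hermiteCoef_deriv hb hbL2 hb'L2, Nat.add_sub_cancel]
        push_cast
        ring
    _ = F 0 - F m + (G 0 - G m) := by
        rw [Finset.sum_add_distrib, Finset.sum_range_sub', Finset.sum_range_sub']
    _ = _ := by
        simp only [F, G, CharP.cast_eq_zero, zero_div, Real.sqrt_zero, zero_mul]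
        ring

lemma integral_sq_mul_hermiteFun_add {i j : ℕ} (hij : i ≠ j) (A B : ℝ) :
    ∫ x, (A * hermiteFun i x + B * hermiteFun j x) ^ 2 = A ^ 2 + B ^ 2 := by
  have hint : ∀ k l, Integrable fun x => hermiteFun k x * hermiteFun l x :=
    fun k l => (memLp_hermiteFun k).integrable_mul (memLp_hermiteFun l)
  have hexpand : ∀ x, (A * hermiteFun i x + B * hermiteFun j x) ^ 2
      = A ^ 2 * (hermiteFun i x * hermiteFun i x) + 2 * A * B * (hermiteFun i x * hermiteFun j x)
        + B ^ 2 * (hermiteFun j x * hermiteFun j x) := fun x => by ring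
  have hfirst : Integrable fun x => A ^ 2 * (hermiteFun i x * hermiteFun i x)
      + 2 * A * B * (hermiteFun i x * hermiteFun j x) :=
    ((hint i i).const_mul _).add ((hint i j).const_mul _)
  simp_rw [hexpand]
  rw [integral_add hfirst ((hint j j).const_mul _),
    integral_add ((hint i i).const_mul _) ((hint i j).const_mul _)]
  simp only [integral_const_mul, integral_hermiteFun_mul, hij, if_true, if_false]
  ring

theorem hermite_deriv_proj_diff_general (m : ℕ) (b : ℝ → ℝ)
    (hb : Differentiable ℝ b)
    (hbL2 : MemLp b 2 (volume : Measure ℝ))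
    (hb'L2 : MemLp (deriv b) 2 (volume : Measure ℝ)) :
    (∀ x : ℝ,
        deriv (hermiteProj b m) x - hermiteProj (deriv b) m x
          = -Real.sqrt ((m : ℝ) / 2) * hermiteCoef b (m - 1) * hermiteFun m x
              - Real.sqrt ((m : ℝ) / 2) * hermiteCoef b m * hermiteFun (m - 1) x) ∧
    (∫ x : ℝ, (deriv (hermiteProj b m) x - hermiteProj (deriv b) m x) ^ 2)
      = ((m : ℝ) / 2) * ((hermiteCoef b (m - 1)) ^ 2 + (hermiteCoef b m) ^ 2) := by
  have hdiff := deriv_hermiteProj_sub_hermiteProj_deriv hb hbL2 hb'L2 m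
  refine ⟨hdiff, ?_⟩
  simp_rw [hdiff, neg_mul, sub_eq_add_neg, ← neg_mul]
  cases m with
  | zero => simp
  | succ k =>
    simp only [Nat.add_sub_cancel]
    have hs : Real.sqrt ((k + 1 : ℕ) / 2) ^ 2 = (k + 1 : ℕ) / 2 := Real.sq_sqrt (by positivity)
    rw [integral_sq_mul_hermiteFun_add (by omega : k + 1 ≠ k)]
    linear_combination (hermiteCoef b k ^ 2 + hermiteCoef b (k + 1) ^ 2) * hs

/-- In the Hermite basis, the derivative of the projection and the projection of the
derivative differ by `-√(m/2)⟨b,h_{m-1}⟩h_m - √(m/2)⟨b,h_m⟩h_{m-1}`, and hence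
`‖b_m' - (b')_m‖² = (m/2)(⟨b,h_{m-1}⟩² + ⟨b,h_m⟩²)`. -/
theorem hermite_deriv_proj_diff (m : ℕ) (hm : 1 ≤ m) (b : ℝ → ℝ)
    (hb : Differentiable ℝ b)
    (hbL2 : MemLp b 2 (volume : Measure ℝ))
    (hb'L2 : MemLp (deriv b) 2 (volume : Measure ℝ))
    (hdecayTop : ∀ j, Tendsto (fun x => b x * hermiteFun j x) atTop (nhds 0))
    (hdecayBot : ∀ j, Tendsto (fun x => b x * hermiteFun j x) atBot (nhds 0)) :
    (∀ x : ℝ,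
        deriv (hermiteProj b m) x - hermiteProj (deriv b) m x
          = -Real.sqrt ((m : ℝ) / 2) * hermiteCoef b (m - 1) * hermiteFun m x
              - Real.sqrt ((m : ℝ) / 2) * hermiteCoef b m * hermiteFun (m - 1) x) ∧
    (∫ x : ℝ, (deriv (hermiteProj b m) x - hermiteProj (deriv b) m x) ^ 2)
      = ((m : ℝ) / 2) * ((hermiteCoef b (m - 1)) ^ 2 + (hermiteCoef b m) ^ 2) :=
  hermite_deriv_proj_diff_general m b hb hbL2 hb'L2
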